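/- arXiv:1603.00254 — 2 statements merged into one kernel-verified Lean document; each statement's English description precedes it below -/
import Mathlib

section
/- Let G be a connected 3-regular graph on 2n vertices and let (V₁,V₂) be a maximum cut of the complement of G chosen so that ||V₁| − |V₂|| is minimized among maximum cuts. Then |V₁| = |V₂| = n. -/
open SimpleGraph Finset

variable {V : Type*}

/-- The Seidel switch of a graph `G` on the vertex set `A`: pairs with exactly one
endpoint in `A` have their adjacency complemented. -/
def Seidel (G : SimpleGraph V) (A : Finset V) : SimpleGraph V where
  Adj x y := x ≠ y ∧ (G.Adj x y ↔ (x ∈ A ↔ y ∈ A))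
  symm := by
    constructor
    rintro x y ⟨hne, h⟩
    exact ⟨hne.symm, (G.adj_comm y x).trans (h.trans Iff.comm)⟩
  loopless := by
    constructor
    rintro x ⟨hne, _⟩
    exact hne rfl

instance Seidel.decidableAdj [DecidableEq V] (G : SimpleGraph V) [DecidableRel G.Adj]
    (A : Finset V) : DecidableRel (Seidel G A).Adj := fun x y => by
  unfold Seidel
  infer_instance

/-- `eCross G A` is the number of edges of `G` with exactly one endpoint in `A`. -/
def eCross [Fintype V] [DecidableEq V] (G : SimpleGraph V) [DecidableRel G.Adj]
    (A : Finset V) : ℕ :=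
  (G.edgeFinset.filter (fun e => ∃ x ∈ A, ∃ y, y ∉ A ∧ e = s(x, y))).card

/-!
Moving a vertex `v` from the larger side `A` of a cut of `Gᶜ` to the smaller side changes the
cut size by `|A| - |Aᶜ| - 1 - deg v + 2c`, where `c` is the number of `G`-neighbours of `v` in
`Aᶜ`. At a maximum cut with `|A| > |Aᶜ|` this is `≤ 0`, so `|A| - |Aᶜ| + 2c ≤ 4`. Since `|V|`
is even, if some `v ∈ A` has `c ≥ 1` then `|A| - |Aᶜ| = 2` and the move yields an equally large,
balanced cut. Otherwise no edge of `G` leaves `A`, so by connectivity `A = V`; then the cut is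
empty, `Gᶜ` has no edges, and every cut is maximum, a balanced one included.
-/

namespace SimpleGraph

lemma Preconnected.exists_adj_mem_notMem {G : SimpleGraph V} (hG : G.Preconnected)
    {s : Set V} {u w : V} (hu : u ∈ s) (hw : w ∉ s) : ∃ x ∈ s, ∃ y ∉ s, G.Adj x y := by
  obtain ⟨d, -, hd, hd'⟩ := (hG u w).some.exists_boundary_dart s hu hw
  exact ⟨d.fst, hd, d.snd, hd', d.adj⟩

variable (H : SimpleGraph V) [DecidableRel H.Adj]

lemma card_interedges_eq_sum (s t : Finset V) :
    #(H.interedges s t) = ∑ x ∈ s, #{y ∈ t | H.Adj x y} := by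
  simp only [interedges_def, card_filter, sum_product]

lemma card_interedges_comm (s t : Finset V) :
    #(H.interedges s t) = #(H.interedges t s) :=
  have := H.symm
  Rel.card_interedges_comm s t

lemma card_interedges_insert_left [DecidableEq V] {a : V} {s : Finset V} (ha : a ∉ s)
    (t : Finset V) :
    #(H.interedges (insert a s) t) = #{y ∈ t | H.Adj a y} + #(H.interedges s t) := by
  rw [card_interedges_eq_sum, sum_insert ha, card_interedges_eq_sum]

lemma card_filter_adj_erase_add_card_filter_adj_compl [Fintype V] [DecidableEq V] (v : V)
    (A : Finset V) : #{y ∈ A.erase v | H.Adj v y} + #{y ∈ Aᶜ | H.Adj v y} = H.degree v := by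
  rw [filter_erase, erase_eq_of_notMem (by simp), card_filter, card_filter, sum_add_sum_compl,
    ← card_filter, ← neighborFinset_eq_filter, card_neighborFinset_eq_degree]

end SimpleGraph

section
variable [Fintype V] [DecidableEq V] (H : SimpleGraph V) [DecidableRel H.Adj]

lemma eCross_eq_card_interedges (A : Finset V) : eCross H A = #(H.interedges A Aᶜ) := by
  rw [eCross]
  refine (card_nbij (fun p => s(p.1, p.2)) ?_ ?_ ?_).symm
  · rintro ⟨x, y⟩ hp
    rw [mem_coe, mk_mem_interedges_iff, mem_compl] at hp
    simp only [mem_coe, mem_filter, mem_edgeFinset, mem_edgeSet]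
    exact ⟨hp.2.2, x, hp.1, y, hp.2.1, rfl⟩
  · rintro ⟨x, y⟩ hp ⟨x', y'⟩ hp' h
    rw [mem_coe, mk_mem_interedges_iff, mem_compl] at hp hp'
    rcases Sym2.eq_iff.mp h with ⟨rfl, rfl⟩ | ⟨rfl, rfl⟩
    · rfl
    · exact absurd hp'.1 hp.2.1
  · rintro e he
    simp only [coe_filter, mem_edgeFinset, Set.mem_ofPred_eq] at he
    obtain ⟨hE, x, hx, y, hy, rfl⟩ := he
    exact ⟨(x, y), by simpa [mk_mem_interedges_iff, hx, hy] using hE, rfl⟩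

lemma eCross_compl (A : Finset V) : eCross H Aᶜ = eCross H A := by
  rw [eCross_eq_card_interedges, eCross_eq_card_interedges, compl_compl,
    H.card_interedges_comm]

lemma eCross_add_eCross_compl (A : Finset V) : eCross H A + eCross Hᶜ A = #A * #Aᶜ := by
  rw [eCross_eq_card_interedges, eCross_eq_card_interedges]
  exact H.card_interedges_add_card_interedges_compl disjoint_compl_right

lemma eCross_erase_add {v : V} {A : Finset V} (hv : v ∈ A) :
    eCross H (A.erase v) + #{y ∈ Aᶜ | H.Adj v y} = eCross H A + #{y ∈ A.erase v | H.Adj v y} := by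
  have hA := H.card_interedges_insert_left (notMem_erase v A) Aᶜ
  have hS := H.card_interedges_insert_left (notMem_compl.2 hv) (A.erase v)
  rw [insert_erase hv, ← eCross_eq_card_interedges] at hA
  rw [← compl_erase, H.card_interedges_comm, ← eCross_eq_card_interedges,
    H.card_interedges_comm] at hS
  omega

lemma eCross_compl_erase (G : SimpleGraph V) [DecidableRel G.Adj] {v : V} {A : Finset V}
    (hv : v ∈ A) :
    (eCross Gᶜ (A.erase v) : ℤ) =
      eCross Gᶜ A + #A - #Aᶜ - 1 - G.degree v + 2 * #{y ∈ Aᶜ | G.Adj v y} := by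
  have hA := eCross_add_eCross_compl G A
  have hS := eCross_add_eCross_compl G (A.erase v)
  have hswitch := eCross_erase_add G hv
  have hdeg := G.card_filter_adj_erase_add_card_filter_adj_compl v A
  have hcard := card_erase_add_one hv
  rw [compl_erase, card_insert_of_notMem (notMem_compl.2 hv)] at hS
  rw [← hcard] at hA ⊢
  zify at hA hS hswitch hdeg
  push_cast
  linear_combination hS - hA - hswitch - hdeg

end

section
variable [Fintype V] [DecidableEq V]

def IsMaxCut (H : SimpleGraph V) [DecidableRel H.Adj] (A : Finset V) : Prop :=
  ∀ B : Finset V, eCross H B ≤ eCross H A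

def imbalance (A : Finset V) : ℕ :=
  ((#A : ℤ) - #Aᶜ).natAbs

lemma imbalance_compl (A : Finset V) : imbalance Aᶜ = imbalance A := by
  rw [imbalance, imbalance, compl_compl, ← Int.natAbs_neg, neg_sub]

lemma exists_imbalance_eq_zero (heven : Even (Fintype.card V)) :
    ∃ B : Finset V, imbalance B = 0 := by
  obtain ⟨n, hn⟩ := heven
  obtain ⟨B, -, hB⟩ := exists_subset_card_eq (s := (univ : Finset V)) (n := n) (by simp; omega)
  refine ⟨B, ?_⟩
  have := card_add_card_compl B
  unfold imbalance
  omega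

lemma IsMaxCut.compl {H : SimpleGraph V} [DecidableRel H.Adj] {A : Finset V}
    (hA : IsMaxCut H A) : IsMaxCut H Aᶜ :=
  fun B => eCross_compl H A ▸ hA B

variable {G : SimpleGraph V} [DecidableRel G.Adj] {A : Finset V}

lemma IsMaxCut.card_sub_card_compl_add_two_mul_le (hA : IsMaxCut Gᶜ A) {v : V} (hv : v ∈ A) :
    (#A : ℤ) - #Aᶜ + 2 * #{y ∈ Aᶜ | G.Adj v y} ≤ G.degree v + 1 := by
  have := eCross_compl_erase G hv
  have := hA (A.erase v)
  omega

lemma IsMaxCut.exists_imbalance_lt_of_adj (hA : IsMaxCut Gᶜ A) (hdeg : ∀ v, G.degree v ≤ 3)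
    (heven : Even (Fintype.card V)) (hlt : #Aᶜ < #A) {v y : V} (hv : v ∈ A) (hy : y ∉ A)
    (hadj : G.Adj v y) : ∃ B, IsMaxCut Gᶜ B ∧ imbalance B < imbalance A := by
  have hc : 0 < #{y ∈ Aᶜ | G.Adj v y} := card_pos.2 ⟨y, by simp [hy, hadj]⟩
  obtain ⟨k, hk⟩ := card_add_card_compl A ▸ heven
  have hloc := hA.card_sub_card_compl_add_two_mul_le hv
  have hdegv := hdeg v
  have hswitch := eCross_compl_erase G hv
  have hcard := card_erase_add_one hv
  have hcard' : #(A.erase v)ᶜ = #Aᶜ + 1 := by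
    rw [compl_erase, card_insert_of_notMem (notMem_compl.2 hv)]
  refine ⟨A.erase v, fun C => ?_, ?_⟩
  · have := hA C
    omega
  · unfold imbalance
    omega

lemma IsMaxCut.exists_imbalance_lt (hG : G.Connected) (hdeg : ∀ v, G.degree v ≤ 3)
    (heven : Even (Fintype.card V)) (hA : IsMaxCut Gᶜ A) (hne : #A ≠ #Aᶜ) :
    ∃ B, IsMaxCut Gᶜ B ∧ imbalance B < imbalance A := by
  wlog hlt : #Aᶜ < #A generalizing A
  · simpa only [imbalance_compl] using
      this hA.compl (by rwa [compl_compl, ne_comm]) (by rw [compl_compl]; omega)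
  obtain ⟨u, hu⟩ : A.Nonempty := card_pos.1 (by omega)
  obtain hAc | ⟨w, hw⟩ := Aᶜ.eq_empty_or_nonempty
  · have hcut : eCross Gᶜ A = 0 := by
      have := eCross_add_eCross_compl G A
      rw [hAc, card_empty, mul_zero] at this
      omega
    obtain ⟨B, hB⟩ := exists_imbalance_eq_zero heven
    refine ⟨B, fun C => (hA C).trans (hcut.trans_le (Nat.zero_le _)), ?_⟩
    unfold imbalance at hB ⊢
    omega
  · obtain ⟨v, hv, y, hy, hadj⟩ :=
      hG.preconnected.exists_adj_mem_notMem (s := (A : Set V)) hu (mem_compl.1 hw)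
    exact hA.exists_imbalance_lt_of_adj hdeg heven hlt hv hy hadj

end

theorem max_cut_balanced [Fintype V] [DecidableEq V]
    (G : SimpleGraph V) [DecidableRel G.Adj] (n : ℕ)
    (hconn : G.Connected) (hreg : ∀ v : V, G.degree v = 3)
    (hcard : Fintype.card V = 2 * n)
    (A : Finset V)
    (hmax : ∀ B : Finset V, eCross Gᶜ B ≤ eCross Gᶜ A)
    (hbal : ∀ B : Finset V, (∀ C : Finset V, eCross Gᶜ C ≤ eCross Gᶜ B) →
      ((A.card : ℤ) - (Aᶜ.card : ℤ)).natAbs ≤ ((B.card : ℤ) - (Bᶜ.card : ℤ)).natAbs) :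
    A.card = n ∧ Aᶜ.card = n := by
  have hbalanced : #A = #Aᶜ := by
    by_contra hne
    obtain ⟨B, hB, hlt⟩ := IsMaxCut.exists_imbalance_lt hconn (fun v => (hreg v).le)
      (hcard ▸ even_two_mul n) hmax hne
    exact (hbal B hB).not_gt hlt
  have := card_add_card_compl A
  omega
end

section
/- Every graph G on n vertices has a switch S(G,A), for some A ⊆ V(G), whose maximum degree is at most ⌊(n−1)/2⌋. -/
open SimpleGraph Finset

variable {V : Type*}

lemma seidel_adj (G : SimpleGraph V) (A : Finset V) (x y : V) :
    (Seidel G A).Adj x y ↔ x ≠ y ∧ (G.Adj x y ↔ (x ∈ A ↔ y ∈ A)) := Iff.rfl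

lemma seidel_comp [DecidableEq V] (G : SimpleGraph V) (A B : Finset V) :
    Seidel (Seidel G A) B = Seidel G (symmDiff A B) := by
  ext x y
  simp only [seidel_adj, Finset.mem_symmDiff]
  constructor <;> rintro ⟨h, h2⟩ <;> refine ⟨h, ?_⟩ <;> tauto

lemma edgeFinset_card_congr {G1 G2 : SimpleGraph V} [Fintype G1.edgeSet] [Fintype G2.edgeSet]
    (h : G1 = G2) : G1.edgeFinset.card = G2.edgeFinset.card := by
  have he : G1.edgeFinset = G2.edgeFinset := by
    ext e; rw [mem_edgeFinset, mem_edgeFinset, h]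
  rw [he]

lemma seidel_single_neighborFinset [Fintype V] [DecidableEq V] (H : SimpleGraph V)
    [DecidableRel H.Adj] (v : V) :
    (Seidel H {v}).neighborFinset v = (insert v (H.neighborFinset v))ᶜ := by
  ext u
  have hvv : ¬ H.Adj v v := H.loopless.irrefl v
  by_cases huv : u = v
  · subst huv; simp [mem_neighborFinset, seidel_adj, hvv]
  · simp only [mem_neighborFinset, seidel_adj, mem_compl, mem_insert, mem_singleton,
      huv, iff_false, false_or, not_or]
    constructor
    · rintro ⟨h1, h2⟩
      intro hadj
      exact (h2.mp hadj) trivial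
    · intro hadj
      refine ⟨fun e => huv e.symm, ?_⟩
      constructor
      · intro ha; exact absurd ha hadj
      · intro f; exact (f trivial).elim

lemma seidel_single_degree [Fintype V] [DecidableEq V] (H : SimpleGraph V)
    [DecidableRel H.Adj] (v : V) :
    (Seidel H {v}).degree v = Fintype.card V - (H.degree v + 1) := by
  rw [← card_neighborFinset_eq_degree, seidel_single_neighborFinset, card_compl,
    Finset.card_insert_of_notMem (by simp), card_neighborFinset_eq_degree]

lemma seidel_single_edge_lt [Fintype V] [DecidableEq V] (H : SimpleGraph V)
    [DecidableRel H.Adj] (v : V) (hd : (Fintype.card V - 1) / 2 < H.degree v) :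
    (Seidel H {v}).edgeFinset.card < H.edgeFinset.card := by
  have split : ∀ (K : SimpleGraph V) [DecidableRel K.Adj],
      K.edgeFinset.card = K.degree v + (K.edgeFinset.filter (fun e => ¬ v ∈ e)).card := by
    intro K _
    rw [← Finset.card_filter_add_card_filter_not (p := fun e => v ∈ e),
      ← incidenceFinset_eq_filter, card_incidenceFinset_eq_degree]
  have same : ((Seidel H {v}).edgeFinset.filter (fun e => ¬ v ∈ e)) =
      (H.edgeFinset.filter (fun e => ¬ v ∈ e)) := by
    ext e
    induction e using Sym2.ind with
    | _ x y =>
      by_cases hx : v = x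
      · simp [mem_filter, hx]
      · by_cases hy : v = y
        · simp [mem_filter, hy]
        · simp only [mem_filter, mem_edgeFinset, mem_edgeSet, seidel_adj, Sym2.mem_iff,
            mem_singleton, hx, hy, or_self, not_false_eq_true, and_true,
            Ne.symm hx, Ne.symm hy, iff_false]
          constructor
          · rintro ⟨h1, h2⟩
            exact h2.mpr trivial
          · intro hadj
            exact ⟨hadj.ne, iff_of_true hadj trivial⟩
  have h1 := split H
  have h2 := split (Seidel H {v})
  rw [same] at h2
  have hdeg := seidel_single_degree H v
  have hlt : H.degree v < Fintype.card V := H.degree_lt_card_verts v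
  omega

theorem exists_switch_maxDegree_le [Fintype V] [DecidableEq V]
    (G : SimpleGraph V) [DecidableRel G.Adj] :
    ∃ A : Finset V, ∀ v : V, (Seidel G A).degree v ≤ (Fintype.card V - 1) / 2 := by
  obtain ⟨A, -, hA⟩ := Finset.exists_min_image (univ : Finset (Finset V))
    (fun A => (Seidel G A).edgeFinset.card) ⟨∅, mem_univ _⟩
  refine ⟨A, fun v => ?_⟩
  by_contra h
  push_neg at h
  have h1 := seidel_single_edge_lt (Seidel G A) v h
  have h2 : (Seidel (Seidel G A) {v}).edgeFinset.card =
      (Seidel G (symmDiff A {v})).edgeFinset.card :=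
    edgeFinset_card_congr (seidel_comp G A {v})
  have h3 := hA (symmDiff A {v}) (mem_univ _)
  omega
end
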